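/- arXiv:1302.4620 — 2 statements merged into one kernel-verified Lean document; each statement's English description precedes it below -/
import Mathlib

section
/- Let N ≥ 1 and α > 0. Let g : ℝ^N → ℝ be continuous, positively homogeneous of degree α (g(tx) = t^α g(x) for all t > 0 and x ∈ ℝ^N), with g(x) > 0 for all x ≠ 0, and quasi-convex (i.e. g((1−λ)x + λy) ≤ max{g(x), g(y)} for all x, y ∈ ℝ^N and λ ∈ [0,1]). Then the function x ↦ g(x)^{1/α} is convex on ℝ^N. -/
open Set MeasureTheory Metric Filter Bornology
open scoped Topology Pointwise

noncomputable section

abbrev Euc (N : ℕ) := EuclideanSpace ℝ (Fin N)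

/-- Torsion energy `J(Ω)`. -/
def torsionJ {N : ℕ} (Ω : Set (Euc N)) : ℝ :=
  sInf { e : ℝ | ∃ v : Euc N → ℝ, ContDiff ℝ (⊤ : ℕ∞) v ∧ HasCompactSupport v ∧
    tsupport v ⊆ Ω ∧
    e = (1/2) * (∫ x, ‖gradient v x‖^2) - ∫ x, v x }

/-- Constraint functional `φ(Ω) = ∫_Ω g²`. -/
def phiF {N : ℕ} (g : Euc N → ℝ) (Ω : Set (Euc N)) : ℝ := ∫ x in Ω, (g x)^2

def Admissible {N : ℕ} (α : ℝ) (g : Euc N → ℝ) : Prop :=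
  Continuous g ∧ (∀ t : ℝ, 0 < t → ∀ x, g (t • x) = t ^ α * g x) ∧
  ∀ x : Euc N, x ≠ 0 → 0 < g x

/-- Laplacian as the sum of pure second derivatives. -/
def lap {N : ℕ} (u : Euc N → ℝ) (x : Euc N) : ℝ :=
  ∑ i, fderiv ℝ (fun y => fderiv ℝ u y (EuclideanSpace.single i 1)) x
      (EuclideanSpace.single i 1)

/-- `u` is a classical stress function of `Ω`. -/
def IsStress {N : ℕ} (Ω : Set (Euc N)) (u : Euc N → ℝ) : Prop :=
  ContinuousOn u (closure Ω) ∧ ContDiffOn ℝ 2 u Ω ∧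
  (∀ x ∈ Ω, lap u x = -1) ∧ (∀ x ∈ frontier Ω, u x = 0) ∧
  (∀ x ∈ frontier Ω, DifferentiableWithinAt ℝ u (closure Ω) x)

/-- `(Ω, u)` is a classical solution of the overdetermined torsion problem for `g`. -/
def ClassicalSolution {N : ℕ} (g : Euc N → ℝ) (Ω : Set (Euc N)) (u : Euc N → ℝ) : Prop :=
  Ω.Nonempty ∧ IsOpen Ω ∧ IsBounded Ω ∧ IsStress Ω u ∧
  ∀ x ∈ frontier Ω, ‖fderivWithin ℝ u (closure Ω) x‖ = g x

/-- `Ω` solves the constrained minimization problem for `g`. -/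
def IsMinimizer {N : ℕ} (g : Euc N → ℝ) (Ω : Set (Euc N)) : Prop :=
  Ω.Nonempty ∧ IsOpen Ω ∧ IsBounded Ω ∧ phiF g Ω ≤ 1 ∧
  ∀ Ω' : Set (Euc N), IsOpen Ω' → phiF g Ω' ≤ 1 → torsionJ Ω ≤ torsionJ Ω'

/-- a positive, quasi-convex, `α`-homogeneous function has convex `α`-th root. -/
theorem statement9 (N : ℕ) (hN : 1 ≤ N) (α : ℝ) (hα : 0 < α)
    (g : Euc N → ℝ) (hgc : Continuous g)
    (hhom : ∀ t : ℝ, 0 < t → ∀ x, g (t • x) = t ^ α * g x)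
    (hpos : ∀ x : Euc N, x ≠ 0 → 0 < g x)
    (hqc : ∀ x y : Euc N, ∀ l ∈ Icc (0:ℝ) 1,
      g ((1 - l) • x + l • y) ≤ max (g x) (g y)) :
    ConvexOn ℝ univ (fun x => g x ^ (1/α)) := by

  have hα1 : 0 < 1/α := by positivity
  set h : Euc N → ℝ := fun x => g x ^ (1/α) with hh
  have g0 : g 0 = 0 := by
    have := hhom 2 (by norm_num) 0
    simp only [smul_zero] at this
    nlinarith [Real.one_lt_rpow_iff_of_pos (show (0:ℝ) < 2 by norm_num) |>.mpr
      (Or.inl ⟨by norm_num, hα⟩)]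
  have gnn : ∀ x, 0 ≤ g x := by
    intro x
    by_cases hx : x = 0
    · simp [hx, g0]
    · exact (hpos x hx).le
  have hnn : ∀ x, 0 ≤ h x := fun x => Real.rpow_nonneg (gnn x) _
  have hhomh : ∀ t : ℝ, 0 < t → ∀ x, h (t • x) = t * h x := by
    intro t ht x
    simp only [hh, hhom t ht x]
    rw [Real.mul_rpow (Real.rpow_nonneg ht.le _) (gnn x), ← Real.rpow_mul ht.le,
      mul_one_div, div_self hα.ne', Real.rpow_one]
  have hqch : ∀ x y : Euc N, ∀ l ∈ Icc (0:ℝ) 1,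
      h ((1 - l) • x + l • y) ≤ max (h x) (h y) := by
    intro x y l hl
    have := hqc x y l hl
    have h1 : h ((1 - l) • x + l • y) ≤ (max (g x) (g y)) ^ (1/α) :=
      Real.rpow_le_rpow (gnn _) this hα1.le
    refine h1.trans ?_
    rcases le_total (g x) (g y) with hle | hle
    · rw [max_eq_right hle]
      exact le_max_right _ _
    · rw [max_eq_left hle]
      exact le_max_left _ _
  refine ⟨convex_univ, ?_⟩
  intro x _ y _ a b ha hb hab
  show h (a • x + b • y) ≤ a * h x + b * h y
  rcases eq_or_lt_of_le ha with ha0 | ha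
  · have hb1 : b = 1 := by linarith
    simp [← ha0, hb1]
  rcases eq_or_lt_of_le hb with hb0 | hb
  · have ha1 : a = 1 := by linarith
    simp [← hb0, ha1]
  have h0 : h 0 = 0 := by
    simp only [hh]
    rw [g0, Real.zero_rpow hα1.ne']
  by_cases hx : x = 0
  · subst hx
    rw [smul_zero, zero_add, hhomh b hb, h0, mul_zero, zero_add]
  by_cases hy : y = 0
  · subst hy
    rw [smul_zero, add_zero, hhomh a ha, h0, mul_zero, add_zero]
  have hs : 0 < h x := Real.rpow_pos_of_pos (hpos x hx) _
  have ht : 0 < h y := Real.rpow_pos_of_pos (hpos y hy) _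
  set s := h x
  set t := h y
  have hd : 0 < a * s + b * t := by positivity
  set d := a * s + b * t with hdd
  set l := b * t / d with hld
  have hl0 : 0 ≤ l := by positivity
  have hl1 : l ≤ 1 := by
    rw [hld, div_le_one hd]
    nlinarith
  have key : a • x + b • y = d • ((1 - l) • (s⁻¹ • x) + l • (t⁻¹ • y)) := by
    have e1 : d * (1 - l) * s⁻¹ = a := by
      rw [hld]
      field_simp
      ring
    have e2 : d * l * t⁻¹ = b := by
      rw [hld]
      field_simp
    rw [smul_add, smul_smul, smul_smul, smul_smul, smul_smul, e1, e2]
  rw [key, hhomh d hd]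
  have hmax : h ((1 - l) • (s⁻¹ • x) + l • (t⁻¹ • y)) ≤ 1 := by
    have := hqch (s⁻¹ • x) (t⁻¹ • y) l ⟨hl0, hl1⟩
    rw [hhomh s⁻¹ (by positivity), hhomh t⁻¹ (by positivity),
      inv_mul_cancel₀ hs.ne', inv_mul_cancel₀ ht.ne', max_self] at this
    exact this
  calc d * h ((1 - l) • (s⁻¹ • x) + l • (t⁻¹ • y)) ≤ d * 1 :=
        mul_le_mul_of_nonneg_left hmax hd.le
    _ = a * s + b * t := by rw [mul_one]
end
end

section
/- Let N ≥ 1, let K ⊂ ℝ^N be a nonempty bounded open convex set, and let u be a continuous nonnegative function on the closure of K such that √u is concave on the closure of K. Let ν be a unit vector, let x̄, x₁, …, x_m ∈ ∂K with u(x̄) = u(x₁) = … = u(x_m) = 0, let λ₁, …, λ_m ≥ 0 with Σᵢ λᵢ = 1 and x̄ = Σᵢ λᵢ xᵢ, and assume there is t₀ > 0 such that x̄ − tν ∈ K and xᵢ − tν ∈ K for all i and all t ∈ (0, t₀). If the one-sided limits D̄ = lim_{t→0⁺} u(x̄ − tν)/t and Dᵢ = lim_{t→0⁺} u(xᵢ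 − tν)/t all exist, then D̄ ≥ (Σᵢ λᵢ √Dᵢ)². -/
open Set MeasureTheory Metric Filter Bornology
open scoped Topology Pointwise

noncomputable section

/-- one-sided derivative inequality for functions with concave square root. -/
theorem statement12 (N : ℕ) (hN : 1 ≤ N)
    (K : Set (Euc N)) (hne : K.Nonempty) (ho : IsOpen K) (hb : IsBounded K)
    (hc : Convex ℝ K)
    (u : Euc N → ℝ) (hu : ContinuousOn u (closure K))
    (hpos : ∀ x ∈ closure K, 0 ≤ u x)
    (hconc : ConcaveOn ℝ (closure K) (fun x => Real.sqrt (u x)))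
    (ν : Euc N) (hν : ‖ν‖ = 1)
    (m : ℕ) (xb : Euc N) (x : Fin m → Euc N)
    (hxb : xb ∈ frontier K) (hx : ∀ i, x i ∈ frontier K)
    (hub : u xb = 0) (hui : ∀ i, u (x i) = 0)
    (l : Fin m → ℝ) (hl : ∀ i, 0 ≤ l i) (hls : ∑ i, l i = 1)
    (hcomb : xb = ∑ i, l i • x i)
    (t₀ : ℝ) (ht₀ : 0 < t₀)
    (hin : ∀ t ∈ Ioo (0:ℝ) t₀, xb - t • ν ∈ K ∧ ∀ i, x i - t • ν ∈ K)
    (Db : ℝ) (Di : Fin m → ℝ)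
    (hDb : Filter.Tendsto (fun t : ℝ => u (xb - t • ν) / t) (𝓝[>] 0) (𝓝 Db))
    (hDi : ∀ i, Filter.Tendsto (fun t : ℝ => u (x i - t • ν) / t) (𝓝[>] 0) (𝓝 (Di i))) :
    (∑ i, l i * Real.sqrt (Di i))^2 ≤ Db := by
  have key : ∀ᶠ t in 𝓝[>] (0:ℝ),
      (∑ i, l i * Real.sqrt (u (x i - t • ν) / t))^2 ≤ u (xb - t • ν) / t := by
    filter_upwards [Ioo_mem_nhdsGT_of_mem (⟨le_refl 0, ht₀⟩ : (0:ℝ) ∈ Ico 0 t₀)] with t ht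
    obtain ⟨ht1, ht2⟩ := ht
    obtain ⟨hb1, hb2⟩ := hin t ⟨ht1, ht2⟩
    have hmem : ∀ i, x i - t • ν ∈ closure K := fun i => subset_closure (hb2 i)
    have hnn : ∀ i, 0 ≤ u (x i - t • ν) := fun i => hpos _ (hmem i)
    have hconv : (∑ i, l i • (x i - t • ν)) = xb - t • ν := by
      simp only [smul_sub, Finset.sum_sub_distrib, ← Finset.sum_smul, hls, hcomb, one_smul]
    have h1 : ∑ i, l i • Real.sqrt (u (x i - t • ν)) ≤ Real.sqrt (u (xb - t • ν)) := by
      have := hconc.le_map_sum (fun i _ => hl i) (by simpa using hls) (fun i _ => hmem i)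
      rwa [hconv] at this
    have hSnn : 0 ≤ ∑ i, l i • Real.sqrt (u (x i - t • ν)) :=
      Finset.sum_nonneg fun i _ => smul_nonneg (hl i) (Real.sqrt_nonneg _)
    have h2 : (∑ i, l i • Real.sqrt (u (x i - t • ν)))^2 ≤ u (xb - t • ν) := by
      calc (∑ i, l i • Real.sqrt (u (x i - t • ν)))^2
          ≤ (Real.sqrt (u (xb - t • ν)))^2 := pow_le_pow_left₀ hSnn h1 2
        _ = u (xb - t • ν) := Real.sq_sqrt (hpos _ (subset_closure hb1))
    have hrw : (∑ i, l i * Real.sqrt (u (x i - t • ν) / t))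
        = (∑ i, l i • Real.sqrt (u (x i - t • ν))) / Real.sqrt t := by
      rw [Finset.sum_div]
      refine Finset.sum_congr rfl fun i _ => ?_
      rw [Real.sqrt_div (hnn i), smul_eq_mul, mul_div_assoc]
    rw [hrw, div_pow, Real.sq_sqrt ht1.le]
    gcongr
  have hR : Tendsto (fun t => (∑ i, l i * Real.sqrt (u (x i - t • ν) / t))^2) (𝓝[>] (0:ℝ))
      (𝓝 ((∑ i, l i * Real.sqrt (Di i))^2)) := by
    apply Tendsto.pow
    apply tendsto_finset_sum
    intro i _
    exact ((Real.continuous_sqrt.continuousAt.tendsto.comp (hDi i)).const_mul _)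
  exact le_of_tendsto_of_tendsto hR hDb key
end
end
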